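/- arXiv:2202.10428 — 2 statements merged into one kernel-verified Lean document; each statement's English description precedes it below -/
import Mathlib

section
/- Let A be a C*-algebra and let a ∈ A be a nonzero positive element such that 0 is not an accumulation point of the spectrum of a. Then there exist a norm-continuous map h : [0,1] → C*(a) (the C*-subalgebra of A generated by a) and a projection p ∈ C*(a) such that h(0) = a, h(1) = p, h(t) is positive for every t ∈ [0,1], and h(t) is Cuntz equivalent to a for every t ∈ [0,1]. -/
open Filter Topology

section Defs

variable {A : Type*}

/-- Cuntz subequivalence: `a ≾ b` iff there is a sequence `vₙ` with `‖vₙ * b * vₙ* - a‖ → 0`. -/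
def CuntzLE [NonUnitalCStarAlgebra A] (a b : A) : Prop :=
  ∃ v : ℕ → A, Tendsto (fun n => ‖v n * b * star (v n) - a‖) atTop (𝓝 0)

/-- Cuntz equivalence: `a ∼ b` iff `a ≾ b` and `b ≾ a`. -/
def CuntzEquiv [NonUnitalCStarAlgebra A] (a b : A) : Prop :=
  CuntzLE a b ∧ CuntzLE b a

/-- A projection: a self-adjoint idempotent. -/
def IsProjection [Mul A] [Star A] (p : A) : Prop :=
  IsSelfAdjoint p ∧ p * p = p

/-- Murray–von Neumann equivalence of projections. -/
def MvNEquiv [Mul A] [Star A] (p q : A) : Prop :=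
  ∃ v : A, star v * v = p ∧ v * star v = q

/-- The hereditary subalgebra generated by a positive element `a`: the closure of `a A a`. -/
def her [NonUnitalCStarAlgebra A] (a : A) : Set A :=
  closure {x : A | ∃ y : A, x = a * y * a}

/-- A C*-algebra is simple if its only closed two-sided ideals are `⊥` and `⊤`. -/
def IsSimpleCStarAlgebra (A : Type*) [NonUnitalCStarAlgebra A] : Prop :=
  ∀ I : TwoSidedIdeal A, IsClosed (I : Set A) → I = ⊥ ∨ I = ⊤

/-- A unital C*-algebra is approximately divisible if for each `N ≥ 1` there is an
approximately central sequence of unital `*`-homomorphisms `M_N(ℂ) ⊕ M_{N+1}(ℂ) → A`. -/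
def ApproximatelyDivisible (A : Type*) [CStarAlgebra A] : Prop :=
  ∀ N : ℕ, 0 < N →
    ∃ φ : ℕ → (Matrix (Fin N) (Fin N) ℂ × Matrix (Fin (N + 1)) (Fin (N + 1)) ℂ) →⋆ₐ[ℂ] A,
      ∀ x c, Tendsto (fun n => ‖(φ n) x * c - c * (φ n) x‖) atTop (𝓝 (0 : ℝ))

/-- Real rank zero: every self-adjoint element is a norm limit of self-adjoint elements
with finite spectrum. -/
def RealRankZero (A : Type*) [CStarAlgebra A] : Prop :=
  ∀ a : A, IsSelfAdjoint a → ∀ ε : ℝ, 0 < ε →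
    ∃ b : A, IsSelfAdjoint b ∧ (spectrum ℂ b).Finite ∧ ‖a - b‖ < ε

/-- Stable finiteness: every isometry in every matrix algebra over `A` is a unitary. -/
def StablyFinite (A : Type*) [CStarAlgebra A] : Prop :=
  ∀ n : ℕ, ∀ v : Matrix (Fin n) (Fin n) A, star v * v = 1 → v * star v = 1

/-- A tracial state: a unital positive linear functional satisfying the trace identity. -/
def IsTracialState [CStarAlgebra A] (φ : A →ₗ[ℂ] ℂ) : Prop :=
  φ 1 = 1 ∧ (∀ x : A, ∃ r : ℝ, 0 ≤ r ∧ φ (star x * x) = (r : ℂ)) ∧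
    ∀ x y : A, φ (x * y) = φ (y * x)

/-- The dimension function associated to a tracial state:
`d_τ(a) = lim_{n → ∞} τ(a^{1/n})`. -/
noncomputable def dTau [CStarAlgebra A] (φ : A →ₗ[ℂ] ℂ) (a : A) : ℝ :=
  limUnder atTop (fun n : ℕ => (φ (cfc (fun t : ℝ => t ^ ((n : ℝ)⁻¹)) a)).re)

/-- Strict comparison of positive elements with respect to tracial states. -/
def StrictComparison (A : Type*) [CStarAlgebra A] [PartialOrder A] [StarOrderedRing A] : Prop :=
  ∀ a b : A, 0 ≤ a → 0 ≤ b →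
    (∀ φ : A →ₗ[ℂ] ℂ, IsTracialState φ → dTau φ a < dTau φ b) → CuntzLE a b

end Defs

lemma cuntz_helper {A : Type*} [NonUnitalCStarAlgebra A] (b c : A) (v : A)
    (hv : v * c * star v = b) : CuntzLE b c :=
  ⟨fun _ => v, by simp [hv]⟩

lemma cfcn_mem_closure_adjoin {A : Type*} [NonUnitalCStarAlgebra A]
    [PartialOrder A] [StarOrderedRing A]
    (a : A) (ha : IsSelfAdjoint a) (f : ℝ → ℝ)
    (hf : ContinuousOn f (quasispectrum ℝ a)) (hf0 : f 0 = 0) :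
    cfcₙ f a ∈ closure (NonUnitalStarAlgebra.adjoin ℂ {a} : Set A) := by
  rw [cfcₙ_apply f a hf hf0 ha]
  have hdense := ContinuousMapZero.adjoin_id_dense (quasispectrum ℝ a)
  have hmem : (⟨⟨_, hf.restrict⟩, hf0⟩ : ContinuousMapZero (quasispectrum ℝ a) ℝ) ∈
      closure (NonUnitalStarAlgebra.adjoin ℝ
        {(ContinuousMapZero.id (quasispectrum ℝ a) : ContinuousMapZero (quasispectrum ℝ a) ℝ)} : Set _) :=
    hdense _
  refine map_mem_closure (cfcₙHom_continuous ha) hmem ?_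
  intro x hx
  show cfcₙHom ha x ∈ NonUnitalStarAlgebra.adjoin ℂ {a}
  induction hx using NonUnitalStarAlgebra.adjoin_induction with
  | mem y hy =>
    simp only [Set.mem_singleton_iff] at hy
    subst hy
    have hid : cfcₙHom ha (ContinuousMapZero.id (quasispectrum ℝ a) :
        ContinuousMapZero (quasispectrum ℝ a) ℝ) = a := cfcₙHom_id ha
    rw [hid]
    exact NonUnitalStarAlgebra.self_mem_adjoin_singleton ℂ a
  | add x y hx hy px py => rw [map_add]; exact add_mem px py
  | zero => rw [map_zero]; exact zero_mem _
  | mul x y hx hy px py => rw [map_mul]; exact mul_mem px py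
  | smul r x hx px =>
    rw [map_smul]
    have : (r : ℝ) • cfcₙHom ha x = ((r : ℂ)) • cfcₙHom ha x := by
      simp [Complex.coe_smul]
    rw [this]
    exact SMulMemClass.smul_mem _ px
  | star x hx px => rw [map_star]; exact star_mem px

/-- Lemma 2.2 of the paper. If `a` is a nonzero positive element of a
C*-algebra such that `0` is not an accumulation point of its spectrum (taken in the
unitization, i.e. the quasispectrum), then there are a norm-continuous `h : [0,1] → C*(a)`
and a projection `p ∈ C*(a)` with `h 0 = a`, `h 1 = p`, and `h t` positive and Cuntz
equivalent to `a` for all `t`. -/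
theorem homotopy_to_projection_of_isolated_zero {A : Type*} [NonUnitalCStarAlgebra A]
    [PartialOrder A] [StarOrderedRing A]
    (a : A) (ha : 0 ≤ a) (ha0 : a ≠ 0)
    (hspec : ¬ AccPt (0 : ℝ) (𝓟 (quasispectrum ℝ a))) :
    ∃ (h : ℝ → A) (p : A),
      ContinuousOn h (Set.Icc 0 1) ∧
      p ∈ closure (NonUnitalStarAlgebra.adjoin ℂ {a} : Set A) ∧
      IsProjection p ∧ h 0 = a ∧ h 1 = p ∧
      ∀ t ∈ Set.Icc (0 : ℝ) 1,
        h t ∈ closure (NonUnitalStarAlgebra.adjoin ℂ {a} : Set A) ∧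
        0 ≤ h t ∧ CuntzEquiv (h t) a := by
  have haS : IsSelfAdjoint a := .of_nonneg ha
  rw [accPt_iff_nhds] at hspec
  push_neg at hspec
  obtain ⟨U, hU, hU0⟩ := hspec
  obtain ⟨ε, hε, hball⟩ := Metric.mem_nhds_iff.mp hU
  have hnn : ∀ x ∈ quasispectrum ℝ a, 0 ≤ x := quasispectrum_nonneg_of_nonneg a ha
  have hgap : ∀ x ∈ quasispectrum ℝ a, x ≠ 0 → ε ≤ x := by
    intro x hx hx0
    by_contra hlt
    push_neg at hlt
    refine hx0 (hU0 x ⟨hball ?_, hx⟩)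
    rw [Metric.mem_ball, Real.dist_eq, sub_zero, abs_of_nonneg (hnn x hx)]
    exact hlt
  set χ : ℝ → ℝ := fun x => min 1 (max 0 (2/ε * x - 1)) with hχdef
  have hχcont : Continuous χ := by fun_prop
  have hχ0 : χ 0 = 0 := by norm_num [hχdef]
  have hχ1 : ∀ x : ℝ, ε ≤ x → χ x = 1 := by
    intro x hx
    have h2 : (2:ℝ) ≤ 2/ε * x := by
      rw [div_mul_eq_mul_div, le_div_iff₀ hε]; nlinarith
    simp only [hχdef]
    rw [max_eq_right (by linarith), min_eq_left (by linarith)]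
  have hχmem : ∀ x ∈ quasispectrum ℝ a, χ x = 0 ∨ χ x = 1 := by
    intro x hx
    by_cases hx0 : x = 0
    · exact Or.inl (hx0 ▸ hχ0)
    · exact Or.inr (hχ1 x (hgap x hx hx0))
  set q : A := cfcₙ (fun x : ℝ => χ x - x) a with hq
  -- the homotopy expressed via cfcₙ
  have key : ∀ t : ℝ, a + t • q = cfcₙ (fun x : ℝ => (1 - t) * x + t * χ x) a := by
    intro t
    have h1 : (fun x : ℝ => (1 - t) * x + t * χ x)
        = fun x : ℝ => x + t • (χ x - x) := by
      funext x; simp only [smul_eq_mul]; ring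
    rw [h1, cfcₙ_add (f := fun x : ℝ => x) (g := fun x : ℝ => t • (χ x - x)) (a := a)
        (by fun_prop) (by norm_num) (by fun_prop) (by simp [hχ0]),
      cfcₙ_id' ℝ a,
      cfcₙ_smul t (fun x : ℝ => χ x - x) a (by fun_prop) (by simp [hχ0])]
  refine ⟨fun t => a + t • q, cfcₙ χ a, ?_, ?_, ?_, ?_, ?_, ?_⟩
  · exact (continuous_const.add (continuous_id.smul continuous_const)).continuousOn
  · exact cfcn_mem_closure_adjoin a haS χ hχcont.continuousOn hχ0
  · constructor
    · exact cfcₙ_predicate χ a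
    · rw [← cfcₙ_mul (f := χ) (g := χ) (a := a) (by fun_prop) hχ0 (by fun_prop) hχ0]
      refine cfcₙ_congr fun x hx => ?_
      rcases hχmem x hx with h | h <;> simp [h]
  · simp
  · show a + (1 : ℝ) • q = cfcₙ χ a
    rw [key 1]
    exact cfcₙ_congr fun x hx => by norm_num
  · intro t ht
    obtain ⟨ht0, ht1⟩ := ht
    set ft : ℝ → ℝ := fun x => (1 - t) * x + t * χ x with hftdef
    have hftcont : Continuous ft := by fun_prop
    have hft0 : ft 0 = 0 := by simp [hftdef, hχ0]
    have hht : a + t • q = cfcₙ ft a := key t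
    have hftpos : ∀ y : ℝ, ε ≤ y → 0 < ft y := by
      intro y hy
      have h1 := hχ1 y hy
      simp only [hftdef, h1, mul_one]
      rcases eq_or_lt_of_le ht1 with hteq | htlt
      · nlinarith
      · nlinarith [mul_pos (by linarith : (0:ℝ) < 1 - t)
          (by linarith : (0:ℝ) < y)]
    have hmaxpos : ∀ x : ℝ, 0 < max x ε := fun x => lt_of_lt_of_le hε (le_max_right x ε)
    -- first direction: v * a * v = h t
    set g : ℝ → ℝ := fun x => χ x * Real.sqrt (ft (max x ε) / max x ε) with hgdef
    have hgcont : Continuous g := by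
      refine hχcont.mul (Real.continuous_sqrt.comp ?_)
      exact (hftcont.comp (continuous_id.max continuous_const)).div
        (continuous_id.max continuous_const) (fun x => (hmaxpos x).ne')
    have hg0 : g 0 = 0 := by simp [hgdef, hχ0]
    set v := cfcₙ g a with hv
    have hvsa : IsSelfAdjoint v := cfcₙ_predicate g a
    have h1 : cfcₙ (fun x : ℝ => g x * x) a = v * a := by
      rw [cfcₙ_mul (f := g) (g := fun x : ℝ => x) (a := a) hgcont.continuousOn hg0
        (by fun_prop) rfl, cfcₙ_id' ℝ a]
    have h2 : cfcₙ (fun x : ℝ => g x * x * g x) a = v * a * v := by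
      rw [cfcₙ_mul (f := fun x : ℝ => g x * x) (g := g) (a := a)
        (by fun_prop) (by simp [hg0]) hgcont.continuousOn hg0, h1]
    have hgft : ∀ x ∈ quasispectrum ℝ a, g x * x * g x = ft x := by
      intro x hx
      by_cases hx0 : x = 0
      · subst hx0; simp [hg0, hft0]
      · have hεx := hgap x hx hx0
        have hxpos : 0 < x := lt_of_lt_of_le hε hεx
        have hmax : max x ε = x := max_eq_left hεx
        have hpos := hftpos x hεx
        have hs : Real.sqrt (ft x / x) * Real.sqrt (ft x / x) = ft x / x :=
          Real.mul_self_sqrt (by positivity)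
        rw [hgdef]
        simp only [hmax, hχ1 x hεx, one_mul]
        rw [mul_right_comm, hs, div_mul_cancel₀ _ hxpos.ne']
    have hvav : v * a * star v = a + t • q := by
      rw [hvsa.star_eq, ← h2, cfcₙ_congr (fun x hx => hgft x hx), ← hht]
    -- second direction: u * (h t) * u = a
    set w : ℝ → ℝ := fun x => χ x * Real.sqrt (max x ε / ft (max x ε)) with hwdef
    have hwcont : Continuous w := by
      refine hχcont.mul (Real.continuous_sqrt.comp ?_)
      exact (continuous_id.max continuous_const).div
        (hftcont.comp (continuous_id.max continuous_const))
        (fun x => (hftpos _ (le_max_right x ε)).ne')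
    have hw0 : w 0 = 0 := by simp [hwdef, hχ0]
    set u := cfcₙ w a with hu
    have husa : IsSelfAdjoint u := cfcₙ_predicate w a
    have h3 : cfcₙ (fun x : ℝ => w x * ft x) a = u * cfcₙ ft a := by
      rw [cfcₙ_mul (f := w) (g := ft) (a := a) hwcont.continuousOn hw0
        hftcont.continuousOn hft0]
    have h4 : cfcₙ (fun x : ℝ => w x * ft x * w x) a = u * cfcₙ ft a * u := by
      rw [cfcₙ_mul (f := fun x : ℝ => w x * ft x) (g := w) (a := a)
        (by fun_prop) (by simp [hw0]) hwcont.continuousOn hw0, h3]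
    have hwft : ∀ x ∈ quasispectrum ℝ a, w x * ft x * w x = x := by
      intro x hx
      by_cases hx0 : x = 0
      · subst hx0; simp [hw0]
      · have hεx := hgap x hx hx0
        have hxpos : 0 < x := lt_of_lt_of_le hε hεx
        have hmax : max x ε = x := max_eq_left hεx
        have hpos := hftpos x hεx
        have hs : Real.sqrt (x / ft x) * Real.sqrt (x / ft x) = x / ft x :=
          Real.mul_self_sqrt (by positivity)
        rw [hwdef]
        simp only [hmax, hχ1 x hεx, one_mul]
        rw [mul_right_comm, hs, div_mul_cancel₀ _ hpos.ne']
    have huhu : u * (a + t • q) * star u = a := by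
      rw [husa.star_eq, hht, ← h4]
      rw [show cfcₙ (fun x : ℝ => w x * ft x * w x) a = cfcₙ (fun x : ℝ => x) a from
        cfcₙ_congr (fun x hx => hwft x hx), cfcₙ_id' ℝ a]
    refine ⟨?_, ?_, ?_, ?_⟩
    · show a + t • q ∈ _
      rw [hht]
      exact cfcn_mem_closure_adjoin a haS ft hftcont.continuousOn hft0
    · rw [show (fun t : ℝ => a + t • q) t = cfcₙ ft a from hht]
      refine cfcₙ_nonneg fun x hx => ?_
      have hx0 := hnn x hx
      rcases hχmem x hx with hc | hc <;> rw [hftdef] <;> simp only [hc] <;> nlinarith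
    · exact cuntz_helper _ _ v hvav
    · exact cuntz_helper _ _ u huhu
end

section
/- Let A be a unital simple separable C*-algebra which is approximately divisible, has real rank zero, is stably finite, and has strict comparison of positive elements, and let a ∈ A be positive. Then there exists a sequence p_1, p_2, … of mutually orthogonal projections in the hereditary subalgebra her(a) = closure(aAa) such that the series b = Σ_{i=1}^∞ 2^{−i} p_i converges in norm, and there is a norm-continuous map h : [0,1] → A with h(t) a positive element of her(a) for every t, h(0) = a, h(1) = b, and h(t) Cuntz equivalent to a for every t ∈ [0,1]. -/
open Filter Topology

/-!
Real rank zero lets one cut a positive `x` by a spectral projection `q` of a nearby element `c`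
with finite spectrum. Then `q x q` is bounded below on the corner `q A q`, hence invertible there
with inverse `R`, and `√x R √x` is a projection in `her x` whose complement compresses `x` no more
than `1 - q` does, i.e. to norm `O(‖x - c‖)`. Iterating this on the compressions `(1 - S) a (1 - S)`
yields mutually orthogonal projections `pᵢ ∈ her a` with partial sums `Sₙ` such that
`√a Sₙ √a → a`. As `2⁻ⁿ Sₙ ≤ b = Σ 2⁻⁽ⁱ⁺¹⁾ pᵢ`, each `Sₙ`, hence `a`, is Cuntz below `b`, while
`b ∈ her a` gives `b ≾ a`; so the segment from `a` to `b` stays in the Cuntz class of `a`.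
-/

section Hereditary

variable {A : Type*} [NonUnitalCStarAlgebra A] {a x y : A}

noncomputable def herSubmodule (a : A) : Submodule ℝ A :=
  (LinearMap.range (LinearMap.mulLeftRight ℝ (a, a))).topologicalClosure

lemma coe_herSubmodule (a : A) : (herSubmodule a : Set A) = her a := by
  rw [herSubmodule, Submodule.topologicalClosure_coe, her]
  congr 1
  ext x
  simp [eq_comm]

lemma add_mem_her (hx : x ∈ her a) (hy : y ∈ her a) : x + y ∈ her a := by
  rw [← coe_herSubmodule] at *
  exact add_mem hx hy

lemma sub_mem_her (hx : x ∈ her a) (hy : y ∈ her a) : x - y ∈ her a := by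
  rw [← coe_herSubmodule] at *
  exact sub_mem hx hy

lemma smul_mem_her (c : ℝ) (hx : x ∈ her a) : c • x ∈ her a := by
  rw [← coe_herSubmodule] at *
  exact Submodule.smul_mem _ c hx

lemma zero_mem_her : (0 : A) ∈ her a := by
  rw [← coe_herSubmodule]
  exact zero_mem _

lemma sum_mem_her {ι : Type*} {s : Finset ι} {f : ι → A} (h : ∀ i ∈ s, f i ∈ her a) :
    ∑ i ∈ s, f i ∈ her a := by
  rw [← coe_herSubmodule] at *
  exact Submodule.sum_mem _ h

lemma mul_mul_mem_her (hx : x ∈ her a) (hy : y ∈ her a) (z : A) : x * z * y ∈ her a :=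
  map_mem_closure₂ (f := fun x y => x * z * y) (by fun_prop) hx hy
    fun _ ⟨u, hu⟩ _ ⟨v, hv⟩ => ⟨u * (a * z * a) * v, by rw [hu, hv]; noncomm_ring⟩

lemma mul_mem_her (hx : x ∈ her a) (hy : y ∈ her a) : x * y ∈ her a :=
  map_mem_closure₂ (f := (· * ·)) continuous_mul hx hy
    fun _ ⟨u, hu⟩ _ ⟨v, hv⟩ => ⟨u * a * a * v, by rw [hu, hv]; noncomm_ring⟩

lemma her_subset_her (hx : x ∈ her a) : her x ⊆ her a :=
  closure_minimal (fun _ ⟨z, hz⟩ => hz ▸ mul_mul_mem_her hx hx z) isClosed_closure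

lemma mul_eq_zero_of_mem_her {w : A} (hwx : w * x = 0) (hy : y ∈ her x) : w * y = 0 := by
  have : w * y ∈ closure {0} := map_mem_closure (continuous_const_mul w) hy
    fun _ ⟨z, hz⟩ => by rw [hz, ← mul_assoc, ← mul_assoc, hwx, zero_mul, zero_mul]; rfl
  simpa using this

end Hereditary

section Regularization

/- A regularized `t ↦ t^(-1/2)` and the square root of its defect: for `v = √x · invSqrtMax ε y`,
`‖v y v* - x‖` is the norm of `x` compressed by `sqrtOneSubDivMax ε y`, which is how Cuntz
subequivalences are witnessed below. -/

variable {ε : ℝ}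

noncomputable def invSqrtMax (ε t : ℝ) : ℝ := (√(max t ε))⁻¹

noncomputable def sqrtOneSubDivMax (ε t : ℝ) : ℝ := √(1 - t / max t ε)

lemma continuous_invSqrtMax (hε : 0 < ε) : Continuous (invSqrtMax ε) :=
  (Real.continuous_sqrt.comp (continuous_id.max continuous_const)).inv₀
    fun t => (Real.sqrt_pos.2 (lt_max_of_lt_right (b := t) hε)).ne'

lemma continuous_div_max (hε : 0 < ε) : Continuous fun t : ℝ => t / max t ε :=
  continuous_id.div (continuous_id.max continuous_const)
    fun t => (lt_max_of_lt_right (b := t) hε).ne'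

lemma continuous_sqrtOneSubDivMax (hε : 0 < ε) : Continuous (sqrtOneSubDivMax ε) :=
  Real.continuous_sqrt.comp (continuous_const.sub (continuous_div_max hε))

lemma div_max_le_one (hε : 0 < ε) (t : ℝ) : t / max t ε ≤ 1 :=
  (div_le_one (lt_max_of_lt_right (b := t) hε)).2 (le_max_left _ _)

lemma invSqrtMax_mul_mul_invSqrtMax (hε : 0 < ε) (t : ℝ) :
    invSqrtMax ε t * t * invSqrtMax ε t = t / max t ε := by
  have hs := Real.sqrt_pos.2 (lt_max_of_lt_right (b := t) hε)
  calc _ = t / (√(max t ε) * √(max t ε)) := by rw [invSqrtMax]; field_simp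
    _ = t / max t ε := by rw [Real.mul_self_sqrt (lt_max_of_lt_right (b := t) hε).le]

lemma sqrtOneSubDivMax_mul_self (hε : 0 < ε) (t : ℝ) :
    sqrtOneSubDivMax ε t * sqrtOneSubDivMax ε t = 1 - t / max t ε :=
  Real.mul_self_sqrt (sub_nonneg.2 (div_max_le_one hε t))

lemma one_sub_div_max_mul_le (hε : 0 < ε) {t : ℝ} (ht : 0 ≤ t) : (1 - t / max t ε) * t ≤ ε := by
  rcases le_total ε t with h | h
  · rw [max_eq_left h, div_self (hε.trans_le h).ne']
    linarith
  · rw [max_eq_right h]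
    nlinarith [div_nonneg ht hε.le]

lemma sqrtOneSubDivMax_nonneg (ε t : ℝ) : 0 ≤ sqrtOneSubDivMax ε t := Real.sqrt_nonneg _

lemma sqrtOneSubDivMax_le_one (hε : 0 < ε) {t : ℝ} (ht : 0 ≤ t) : sqrtOneSubDivMax ε t ≤ 1 :=
  Real.sqrt_le_one.2 (by linarith [div_nonneg ht (lt_max_of_lt_right (b := t) hε).le])

lemma sqrtOneSubDivMax_mul_le (hε : 0 < ε) {t : ℝ} (ht : 0 ≤ t) :
    sqrtOneSubDivMax ε t * t ≤ ε := by
  rcases le_total ε t with h | h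
  · rw [sqrtOneSubDivMax, max_eq_left h, div_self (hε.trans_le h).ne', sub_self,
      Real.sqrt_zero, zero_mul]
    exact hε.le
  · nlinarith [sqrtOneSubDivMax_le_one hε ht]

lemma abs_mul_invSqrtMax_sub_sqrt_le (hε : 0 < ε) {t : ℝ} (ht : 0 ≤ t) :
    |t * invSqrtMax ε t - √t| ≤ √ε := by
  rw [invSqrtMax, ← div_eq_mul_inv]
  rcases le_total ε t with h | h
  · rw [max_eq_left h, Real.div_sqrt, sub_self, abs_zero]
    exact Real.sqrt_nonneg ε
  · rw [max_eq_right h, abs_le]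
    have hε' : 0 < √ε := Real.sqrt_pos.2 hε
    have h1 : t / √ε ≤ √ε := by
      rw [div_le_iff₀ hε', Real.mul_self_sqrt hε.le]
      exact h
    have h2 : √t ≤ √ε := Real.sqrt_le_sqrt h
    constructor <;> linarith [div_nonneg ht hε'.le, Real.sqrt_nonneg t]

end Regularization

lemma cfc_mul_id_mul {A : Type*} [CStarAlgebra A] {y : A} (f : ℝ → ℝ)
    (hf : ContinuousOn f (spectrum ℝ y)) (hy : IsSelfAdjoint y) :
    cfc (fun t => f t * t * f t) y = cfc f y * y * cfc f y := by
  rw [cfc_mul (fun t => f t * t) f y, cfc_mul f (fun t => t) y, cfc_id' ℝ y]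

section SquareRoot

variable {A : Type*} [CStarAlgebra A] [PartialOrder A] [StarOrderedRing A] {x y : A} {ε : ℝ}

lemma norm_mul_mul_self_eq_norm_mul_sqrt_sq (hx : 0 ≤ x) {e : A} (he : IsSelfAdjoint e) :
    ‖e * x * e‖ = ‖e * CFC.sqrt x‖ ^ 2 := by
  rw [sq, ← CStarRing.norm_self_mul_star, star_mul, he.star_eq,
    (CFC.sqrt_nonneg x).isSelfAdjoint.star_eq]
  congr 1
  calc e * x * e = e * (CFC.sqrt x * CFC.sqrt x) * e := by rw [CFC.sqrt_mul_sqrt_self x hx]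
    _ = _ := by noncomm_ring

lemma norm_sqrt_mul_mul_sqrt (hx : 0 ≤ x) {m : A} (hm : IsSelfAdjoint m) :
    ‖CFC.sqrt x * (m * m) * CFC.sqrt x‖ = ‖m * x * m‖ := by
  rw [norm_mul_mul_self_eq_norm_mul_sqrt_sq hx hm, sq, ← CStarRing.norm_star_mul_self, star_mul,
    hm.star_eq, (CFC.sqrt_nonneg x).isSelfAdjoint.star_eq]
  congr 1
  noncomm_ring

lemma norm_conj_invSqrtMax_sub (hx : 0 ≤ x) (hy : 0 ≤ y) (hε : 0 < ε) :
    ‖(CFC.sqrt x * cfc (invSqrtMax ε) y) * y * star (CFC.sqrt x * cfc (invSqrtMax ε) y) - x‖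
      = ‖cfc (sqrtOneSubDivMax ε) y * x * cfc (sqrtOneSubDivMax ε) y‖ := by
  have hy' := hy.isSelfAdjoint
  have hk : cfc (invSqrtMax ε) y * y * cfc (invSqrtMax ε) y = cfc (fun t => t / max t ε) y := by
    rw [← cfc_mul_id_mul _ (continuous_invSqrtMax hε).continuousOn hy']
    exact cfc_congr fun t _ => invSqrtMax_mul_mul_invSqrtMax hε t
  have hm : cfc (sqrtOneSubDivMax ε) y * cfc (sqrtOneSubDivMax ε) y
      = 1 - cfc (fun t => t / max t ε) y := by
    rw [← cfc_mul _ _ y (continuous_sqrtOneSubDivMax hε).continuousOn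
      (continuous_sqrtOneSubDivMax hε).continuousOn, ← cfc_const_one ℝ y,
      ← cfc_sub _ _ y continuousOn_const (continuous_div_max hε).continuousOn]
    exact cfc_congr fun t _ => sqrtOneSubDivMax_mul_self hε t
  have hs := (CFC.sqrt_nonneg x).isSelfAdjoint
  have hk' := (cfc_predicate (invSqrtMax ε) y : IsSelfAdjoint _)
  rw [norm_sub_rev, ← norm_sqrt_mul_mul_sqrt hx (cfc_predicate _ y), hm, star_mul, hs.star_eq,
    hk'.star_eq]
  congr 1
  calc x - CFC.sqrt x * cfc (invSqrtMax ε) y * y * (cfc (invSqrtMax ε) y * CFC.sqrt x)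
      = CFC.sqrt x * CFC.sqrt x - CFC.sqrt x * (cfc (invSqrtMax ε) y * y * cfc (invSqrtMax ε) y)
        * CFC.sqrt x := by rw [CFC.sqrt_mul_sqrt_self x hx]; noncomm_ring
    _ = _ := by rw [hk]; noncomm_ring

lemma tendsto_mul_cfc_invSqrtMax (hx : 0 ≤ x) :
    Tendsto (fun ε => x * cfc (invSqrtMax ε) x) (𝓝[>] 0) (𝓝 (CFC.sqrt x)) := by
  rw [tendsto_iff_norm_sub_tendsto_zero]
  have hlim : Tendsto (fun ε : ℝ => √ε) (𝓝[>] 0) (𝓝 0) := by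
    simpa using (Real.continuous_sqrt.tendsto 0).mono_left nhdsWithin_le_nhds
  refine squeeze_zero' (Eventually.of_forall fun _ => norm_nonneg _) ?_ hlim
  filter_upwards [self_mem_nhdsWithin] with ε (hε : 0 < ε)
  have hf := continuous_invSqrtMax hε
  have h : x * cfc (invSqrtMax ε) x - CFC.sqrt x = cfc (fun t => t * invSqrtMax ε t - √t) x := by
    rw [cfc_sub (fun t => t * invSqrtMax ε t) Real.sqrt x (continuous_id.mul hf).continuousOn,
      cfc_mul (fun t => t) _ x, cfc_id' ℝ x,
      CFC.sqrt_eq_real_sqrt x hx, cfcₙ_eq_cfc]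
  rw [h]
  refine norm_cfc_le (Real.sqrt_nonneg ε) fun t ht => ?_
  rw [Real.norm_eq_abs]
  exact abs_mul_invSqrtMax_sub_sqrt_le hε (spectrum_nonneg_of_nonneg hx ht)

lemma sqrt_mul_mul_sqrt_mem_her (hx : 0 ≤ x) (z : A) : CFC.sqrt x * z * CFC.sqrt x ∈ her x := by
  refine mem_closure_of_tendsto (((tendsto_mul_cfc_invSqrtMax hx).mul tendsto_const_nhds).mul
    (tendsto_mul_cfc_invSqrtMax hx)) (Eventually.of_forall fun ε => ?_)
  have hcomm := (Commute.refl x).cfc_real (invSqrtMax ε)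
  refine ⟨cfc (invSqrtMax ε) x * z * cfc (invSqrtMax ε) x, ?_⟩
  calc _ = x * cfc (invSqrtMax ε) x * z * (cfc (invSqrtMax ε) x * x) := by rw [hcomm.eq]
    _ = _ := by noncomm_ring

lemma mem_her_self (hx : 0 ≤ x) : x ∈ her x := by
  simpa [CFC.sqrt_mul_sqrt_self x hx] using sqrt_mul_mul_sqrt_mem_her hx 1

end SquareRoot

section Cuntz

variable {A : Type*}

section NonUnital

variable [NonUnitalCStarAlgebra A] {x y z : A}

lemma cuntzLE_iff_forall_exists_norm_lt :
    CuntzLE x y ↔ ∀ η > 0, ∃ v : A, ‖v * y * star v - x‖ < η := by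
  refine ⟨fun ⟨v, hv⟩ η hη => ?_, fun h => ?_⟩
  · obtain ⟨n, hn⟩ := (hv.eventually (gt_mem_nhds hη)).exists
    exact ⟨v n, hn⟩
  · choose v hv using fun n : ℕ => h (1 / (n + 1)) Nat.one_div_pos_of_nat
    exact ⟨v, squeeze_zero (fun _ => norm_nonneg _) (fun n => (hv n).le)
      tendsto_one_div_add_atTop_nhds_zero_nat⟩

lemma CuntzLE.of_eq (v : A) (h : v * y * star v = x) : CuntzLE x y :=
  ⟨fun _ => v, by simp [h]⟩

lemma CuntzLE.trans (hxy : CuntzLE x y) (hyz : CuntzLE y z) : CuntzLE x z := by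
  rw [cuntzLE_iff_forall_exists_norm_lt] at *
  intro η hη
  obtain ⟨v, hv⟩ := hxy (η / 2) (half_pos hη)
  obtain ⟨w, hw⟩ := hyz (η / 2 / (‖v‖ * ‖v‖ + 1)) (by positivity)
  refine ⟨v * w, ?_⟩
  have hsplit : v * w * z * star (v * w) - x
      = v * (w * z * star w - y) * star v + (v * y * star v - x) := by
    rw [star_mul]; noncomm_ring
  have hconj : ‖v * (w * z * star w - y) * star v‖ ≤ η / 2 := calc
      _ ≤ ‖v‖ * ‖w * z * star w - y‖ * ‖v‖ := norm_mul₃_le.trans_eq (by rw [norm_star])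
      _ = ‖v‖ * ‖v‖ * ‖w * z * star w - y‖ := by ring
      _ ≤ ‖v‖ * ‖v‖ * (η / 2 / (‖v‖ * ‖v‖ + 1)) := by gcongr
      _ = η / 2 * (‖v‖ * ‖v‖ / (‖v‖ * ‖v‖ + 1)) := mul_div_left_comm _ _ _
      _ ≤ η / 2 := mul_le_of_le_one_right (by positivity)
            ((div_le_one (by positivity)).2 (by linarith))
  calc ‖v * w * z * star (v * w) - x‖
      ≤ ‖v * (w * z * star w - y) * star v‖ + ‖v * y * star v - x‖ := hsplit ▸ norm_add_le _ _
    _ < η := by linarith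

lemma CuntzLE.of_tendsto {x : ℕ → A} {x₀ : A}
    (hx : Tendsto x atTop (𝓝 x₀)) (h : ∀ n, CuntzLE (x n) y) : CuntzLE x₀ y := by
  rw [cuntzLE_iff_forall_exists_norm_lt]
  intro η hη
  obtain ⟨n, hn⟩ := ((tendsto_iff_norm_sub_tendsto_zero.1 hx).eventually
    (gt_mem_nhds (half_pos hη))).exists
  obtain ⟨v, hv⟩ := (cuntzLE_iff_forall_exists_norm_lt.1 (h n)) (η / 2) (half_pos hη)
  refine ⟨v, ?_⟩
  calc ‖v * y * star v - x₀‖ ≤ ‖v * y * star v - x n‖ + ‖x n - x₀‖ :=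
        norm_sub_le_norm_sub_add_norm_sub _ _ _
    _ < η := by linarith

end NonUnital

lemma cuntzLE_smul_self [CStarAlgebra A] (x : A) {c : ℝ} (hc : 0 < c) : CuntzLE x (c • x) := by
  refine .of_eq ((√c)⁻¹ • 1) ?_
  have : (√c)⁻¹ * (c * (√c)⁻¹) = 1 := by
    have := Real.sqrt_pos.2 hc
    field_simp
    exact (Real.sq_sqrt hc.le).symm
  simp [smul_smul, this]

variable [CStarAlgebra A] [PartialOrder A] [StarOrderedRing A] {x y : A}

lemma cuntzLE_of_forall_exists_norm_conj_lt (hx : 0 ≤ x) (hy : 0 ≤ y)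
    (h : ∀ η > 0, ∃ ε > 0, ‖cfc (sqrtOneSubDivMax ε) y * x * cfc (sqrtOneSubDivMax ε) y‖ < η) :
    CuntzLE x y := by
  rw [cuntzLE_iff_forall_exists_norm_lt]
  intro η hη
  obtain ⟨ε, hε, hlt⟩ := h η hη
  exact ⟨_, (norm_conj_invSqrtMax_sub hx hy hε).trans_lt hlt⟩

lemma CuntzLE.of_le (hx : 0 ≤ x) (hxy : x ≤ y) : CuntzLE x y := by
  have hy := hx.trans hxy
  refine cuntzLE_of_forall_exists_norm_conj_lt hx hy fun η hη => ⟨η / 2, half_pos hη, ?_⟩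
  have hm : IsSelfAdjoint (cfc (sqrtOneSubDivMax (η / 2)) y) := cfc_predicate _ y
  have hcont := continuous_sqrtOneSubDivMax (half_pos hη)
  calc ‖cfc (sqrtOneSubDivMax (η / 2)) y * x * cfc (sqrtOneSubDivMax (η / 2)) y‖
      ≤ ‖cfc (sqrtOneSubDivMax (η / 2)) y * y * cfc (sqrtOneSubDivMax (η / 2)) y‖ :=
        CStarAlgebra.norm_le_norm_of_nonneg_of_le (hm.conjugate_nonneg hx)
          (hm.conjugate_le_conjugate hxy)
    _ ≤ η / 2 := by
        rw [← cfc_mul_id_mul _ hcont.continuousOn hy.isSelfAdjoint]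
        refine norm_cfc_le (half_pos hη).le fun t ht => ?_
        have ht0 := spectrum_nonneg_of_nonneg hy ht
        rw [mul_right_comm, sqrtOneSubDivMax_mul_self (half_pos hη),
          Real.norm_of_nonneg (mul_nonneg (sub_nonneg.2 (div_max_le_one (half_pos hη) t)) ht0)]
        exact one_sub_div_max_mul_le (half_pos hη) ht0
    _ < η := half_lt_self hη

lemma cuntzLE_of_mem_her {a : A} (hx : 0 ≤ x) (ha : 0 ≤ a) (hmem : x ∈ her a) : CuntzLE x a := by
  refine cuntzLE_of_forall_exists_norm_conj_lt hx ha fun η hη => ?_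
  obtain ⟨w, ⟨z, rfl⟩, hxw⟩ := Metric.mem_closure_iff.1 hmem (η / 2) (half_pos hη)
  rw [dist_eq_norm] at hxw
  have hsmall : ∀ᶠ ε in 𝓝[>] (0 : ℝ), ε * ‖z‖ * ε < η / 2 ∧ 0 < ε := by
    refine (Tendsto.eventually_lt_const (half_pos hη) ?_).and self_mem_nhdsWithin
    have : Continuous fun ε : ℝ => ε * ‖z‖ * ε := by fun_prop
    simpa using (this.tendsto 0).mono_left nhdsWithin_le_nhds
  obtain ⟨ε, hlt, hε⟩ := hsmall.exists
  refine ⟨ε, hε, ?_⟩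
  set m := cfc (sqrtOneSubDivMax ε) a
  have hm : ‖m‖ ≤ 1 := norm_cfc_le zero_le_one fun t ht => by
    have ht0 := spectrum_nonneg_of_nonneg ha ht
    rw [Real.norm_of_nonneg (sqrtOneSubDivMax_nonneg ε t)]
    exact sqrtOneSubDivMax_le_one hε ht0
  have hma : ‖m * a‖ ≤ ε := by
    rw [← cfc_id' ℝ a, ← cfc_mul _ _ a (continuous_sqrtOneSubDivMax hε).continuousOn]
    refine norm_cfc_le hε.le fun t ht => ?_
    have ht0 := spectrum_nonneg_of_nonneg ha ht
    rw [Real.norm_of_nonneg (mul_nonneg (sqrtOneSubDivMax_nonneg ε t) ht0)]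
    exact sqrtOneSubDivMax_mul_le hε ht0
  have ham : ‖a * m‖ ≤ ε := by
    rwa [← norm_star, star_mul, ha.isSelfAdjoint.star_eq,
      (cfc_predicate _ a : IsSelfAdjoint m).star_eq]
  calc ‖m * x * m‖ = ‖m * (x - a * z * a) * m + (m * a) * z * (a * m)‖ := by congr 1; noncomm_ring
    _ ≤ ‖m‖ * ‖x - a * z * a‖ * ‖m‖ + ‖m * a‖ * ‖z‖ * ‖a * m‖ :=
        (norm_add_le _ _).trans (add_le_add norm_mul₃_le norm_mul₃_le)
    _ ≤ 1 * (η / 2) * 1 + ε * ‖z‖ * ε := by gcongr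
    _ < η := by linarith

lemma cuntzLE_of_tendsto_norm_compression {a b : A} (ha : 0 ≤ a) {e : ℕ → A}
    (he : ∀ n, IsStarProjection (e n))
    (hlim : Tendsto (fun n => ‖(1 - e n) * a * (1 - e n)‖) atTop (𝓝 0))
    (heb : ∀ n, CuntzLE (e n) b) : CuntzLE a b := by
  have hs := (CFC.sqrt_nonneg a).isSelfAdjoint
  refine .of_tendsto (x := fun n => CFC.sqrt a * e n * CFC.sqrt a) ?_
    fun n => (CuntzLE.of_eq (CFC.sqrt a) (by rw [hs.star_eq])).trans (heb n)
  rw [tendsto_iff_norm_sub_tendsto_zero]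
  refine hlim.congr fun n => ?_
  rw [← norm_sqrt_mul_mul_sqrt ha (he n).one_sub.isSelfAdjoint, (he n).one_sub.isIdempotentElem.eq,
    norm_sub_rev]
  congr 1
  calc CFC.sqrt a * (1 - e n) * CFC.sqrt a
      = CFC.sqrt a * CFC.sqrt a - CFC.sqrt a * e n * CFC.sqrt a := by noncomm_ring
    _ = a - CFC.sqrt a * e n * CFC.sqrt a := by rw [CFC.sqrt_mul_sqrt_self a ha]

end Cuntz

section Projections

variable {A : Type*} [CStarAlgebra A] [PartialOrder A] [StarOrderedRing A] {x c q : A}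

lemma exists_isStarProjection_spectral_cut (hc : IsSelfAdjoint c) (hfin : (spectrum ℝ c).Finite)
    {θ : ℝ} (hθ : 0 ≤ θ) : ∃ q : A, IsStarProjection q ∧ θ • q ≤ q * c * q ∧
      (1 - q) * c * (1 - q) ≤ algebraMap ℝ A θ := by
  set f : ℝ → ℝ := fun t => if θ ≤ t then 1 else 0
  have hf : ContinuousOn f (spectrum ℝ c) := hfin.continuousOn f
  have hf' : ContinuousOn (fun t => 1 - f t) (spectrum ℝ c) := hfin.continuousOn _
  have hone_sub : 1 - cfc f c = cfc (fun t => 1 - f t) c := by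
    rw [cfc_sub _ _ c continuousOn_const hf, cfc_const_one ℝ c]
  refine ⟨cfc f c, ⟨?_, cfc_predicate f c⟩, ?_, ?_⟩
  · rw [IsIdempotentElem, ← cfc_mul f f c]
    exact cfc_congr fun t _ => by by_cases h : θ ≤ t <;> simp [f, h]
  · rw [← cfc_mul_id_mul f hf hc, ← cfc_smul θ f c]
    exact cfc_mono fun t _ => by by_cases h : θ ≤ t <;> simp [f, h]
  · rw [hone_sub, ← cfc_mul_id_mul _ hf' hc, ← cfc_const θ c]
    refine cfc_mono fun t _ => ?_
    by_cases h : θ ≤ t <;> simp [f, h, hθ]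
    linarith

lemma IsStarProjection.conjugate_le_conjugate_add_smul (hq : IsStarProjection q)
    (hxc : IsSelfAdjoint (x - c)) : q * x * q ≤ q * c * q + ‖x - c‖ • q := by
  have h := hxc.le_algebraMap_norm_self.trans_eq (Algebra.algebraMap_eq_smul_one _)
  have h' := hq.isSelfAdjoint.conjugate_le_conjugate h
  rw [mul_smul_comm, mul_one, smul_mul_assoc, hq.isIdempotentElem.eq] at h'
  calc q * x * q = q * c * q + q * (x - c) * q := by noncomm_ring
    _ ≤ q * c * q + ‖x - c‖ • q := add_le_add le_rfl h'

lemma exists_isStarProjection_compression_bounds (hrr0 : RealRankZero A) (hx : 0 ≤ x) {δ : ℝ}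
    (hδ : 0 < δ) : ∃ q : A, IsStarProjection q ∧ δ • q ≤ q * x * q ∧
      (1 - q) * x * (1 - q) ≤ algebraMap ℝ A (3 * δ) := by
  obtain ⟨c, hc, hfin, hxc⟩ := hrr0 x hx.isSelfAdjoint δ hδ
  have hfinR : (spectrum ℝ c).Finite := by
    rw [← spectrum.preimage_algebraMap ℂ]
    exact hfin.preimage (algebraMap ℝ ℂ).injective.injOn
  obtain ⟨q, hq, hlow, hup⟩ :=
    exists_isStarProjection_spectral_cut hc hfinR (by positivity : 0 ≤ 2 * δ)
  have hxc_sa : IsSelfAdjoint (x - c) := hx.isSelfAdjoint.sub hc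
  refine ⟨q, hq, ?_, ?_⟩
  · have h := hq.conjugate_le_conjugate_add_smul (x := c) (c := x) (by simpa using hxc_sa.neg)
    rw [norm_sub_rev] at h
    calc δ • q ≤ (2 * δ) • q - ‖x - c‖ • q := by
          rw [← sub_smul]
          exact smul_le_smul_of_nonneg_right (by linarith) hq.nonneg
      _ ≤ q * x * q := by
          rw [sub_le_iff_le_add]
          exact hlow.trans h
  · have h := hq.one_sub.conjugate_le_conjugate_add_smul hxc_sa
    calc (1 - q) * x * (1 - q) ≤ algebraMap ℝ A (2 * δ) + δ • 1 := by
          refine h.trans (add_le_add hup ?_)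
          exact (smul_le_smul_of_nonneg_right hxc.le hq.one_sub_nonneg).trans
            (smul_le_smul_of_nonneg_left hq.one_sub.le_one hδ.le)
      _ = algebraMap ℝ A (3 * δ) := by
          rw [Algebra.algebraMap_eq_smul_one, Algebra.algebraMap_eq_smul_one, ← add_smul]
          ring_nf

lemma exists_inverse_in_corner (hq : IsStarProjection q) {δ : ℝ} (hδ : 0 < δ)
    (hqxq : δ • q ≤ q * x * q) :
    ∃ R : A, IsSelfAdjoint R ∧ R * x * R = R ∧ R * x * q = q := by
  set s := q * x * q
  have hqq : q * q = q := hq.isIdempotentElem.eq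
  have hqs : q * s = s := by simp only [s, ← mul_assoc, hqq]
  have hsq : s * q = s := by simp only [s, mul_assoc, hqq]
  set u := s + (1 - q)
  have hqu : q * u = s := by rw [mul_add, hqs, hq.mul_one_sub_self, add_zero]
  have huq : u * q = s := by rw [add_mul, hsq, hq.one_sub_mul_self, add_zero]
  -- `u` is `s` on the corner `q A q` and `1` on its complement, so it dominates `min δ 1`.
  have hγu : algebraMap ℝ A (min δ 1) ≤ u := calc
    algebraMap ℝ A (min δ 1) = min δ 1 • q + min δ 1 • (1 - q) := by
        rw [Algebra.algebraMap_eq_smul_one, ← smul_add, add_sub_cancel]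
    _ ≤ s + (1 - q) := add_le_add
        ((smul_le_smul_of_nonneg_right (min_le_left _ _) hq.nonneg).trans hqxq)
        ((smul_le_smul_of_nonneg_right (min_le_right _ _) hq.one_sub_nonneg).trans_eq
          (one_smul _ _))
  have hu : IsUnit u :=
    CStarAlgebra.isUnit_of_le _ hγu (isStrictlyPositive_algebraMap (lt_min hδ one_pos))
  set w : A := ↑hu.unit⁻¹
  have hwu : w * u = 1 := hu.unit.inv_mul_of_eq hu.unit_spec
  have huw : u * w = 1 := hu.unit.mul_inv_of_eq hu.unit_spec
  have hu_sa : IsSelfAdjoint u :=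
    ((smul_nonneg hδ.le hq.nonneg).trans hqxq).isSelfAdjoint.add hq.one_sub.isSelfAdjoint
  have hw_sa : IsSelfAdjoint w := by
    refine (hu.unit.inv_eq_of_mul_eq_one_left ?_).symm
    rw [hu.unit_spec, ← hu_sa.star_eq, ← star_mul, huw, star_one]
  have hqw : q * w = w * q := (Commute.units_inv_left (u := hu.unit)
    (by rw [hu.unit_spec]; exact huq.trans hqu.symm)).eq.symm
  have hws : w * s = q := by
    rw [← huq, ← mul_assoc, hwu, one_mul]
  refine ⟨w * q, (hw_sa.commute_iff hq.isSelfAdjoint).1 hqw.symm, ?_, ?_⟩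
  · calc w * q * x * (w * q) = w * q * x * (q * w) := by rw [hqw]
      _ = w * s * w := by simp only [s, mul_assoc]
      _ = w * q := by rw [hws, hqw]
  · calc w * q * x * q = w * s := by simp only [s, mul_assoc]
      _ = q := hws

lemma exists_isStarProjection_mem_her_of_inverse_in_corner (hx : 0 ≤ x) (hq : IsSelfAdjoint q)
    {R : A} (hR : IsSelfAdjoint R) (hRxR : R * x * R = R) (hRxq : R * x * q = q) :
    ∃ p : A, IsStarProjection p ∧ p ∈ her x ∧
      ‖(1 - p) * x * (1 - p)‖ ≤ ‖(1 - q) * x * (1 - q)‖ := by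
  set r := CFC.sqrt x
  have hr : IsSelfAdjoint r := (CFC.sqrt_nonneg x).isSelfAdjoint
  have hrr : r * r = x := CFC.sqrt_mul_sqrt_self x hx
  have hp : IsStarProjection (r * R * r) := by
    refine ⟨?_, ?_⟩
    · calc r * R * r * (r * R * r) = r * (R * (r * r) * R) * r := by noncomm_ring
        _ = r * R * r := by rw [hrr, hRxR, mul_assoc]
    · rw [IsSelfAdjoint, star_mul, star_mul, hR.star_eq, hr.star_eq, mul_assoc]
  refine ⟨r * R * r, hp, sqrt_mul_mul_sqrt_mem_her hx R, ?_⟩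
  -- `r * R * r` fixes `r * q`, so `(1 - r * R * r) * r` vanishes on `q`.
  have hprq : (1 - r * R * r) * r * q = 0 := by
    have : r * R * r * r * q = r * q := calc
      _ = r * (R * (r * r) * q) := by noncomm_ring
      _ = r * q := by rw [hrr, hRxq]
    rw [sub_mul, sub_mul, one_mul, this, sub_self]
  have hle : ‖(1 - r * R * r) * r‖ ≤ ‖(1 - q) * r‖ := calc
    ‖(1 - r * R * r) * r‖ = ‖(1 - r * R * r) * (r * (1 - q))‖ := by
        rw [← mul_assoc, mul_sub, mul_one, hprq, sub_zero]
    _ ≤ ‖1 - r * R * r‖ * ‖r * (1 - q)‖ := norm_mul_le _ _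
    _ ≤ ‖r * (1 - q)‖ := mul_le_of_le_one_left (norm_nonneg _) (hp.one_sub.norm_le _)
    _ = ‖(1 - q) * r‖ := by
        rw [← norm_star, star_mul, hr.star_eq, ((IsSelfAdjoint.one A).sub hq).star_eq]
  rw [norm_mul_mul_self_eq_norm_mul_sqrt_sq hx hp.one_sub.isSelfAdjoint,
    norm_mul_mul_self_eq_norm_mul_sqrt_sq hx ((IsSelfAdjoint.one A).sub hq)]
  exact pow_le_pow_left₀ (norm_nonneg _) hle 2

lemma exists_isStarProjection_mem_her_norm_le (hrr0 : RealRankZero A) (hx : 0 ≤ x) {ε : ℝ}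
    (hε : 0 < ε) :
    ∃ p : A, IsStarProjection p ∧ p ∈ her x ∧ ‖(1 - p) * x * (1 - p)‖ ≤ ε := by
  obtain ⟨q, hq, hlow, hup⟩ :=
    exists_isStarProjection_compression_bounds hrr0 hx (δ := ε / 3) (by positivity)
  obtain ⟨R, hR, hRxR, hRxq⟩ := exists_inverse_in_corner hq (by positivity) hlow
  obtain ⟨p, hp, hmem, hle⟩ :=
    exists_isStarProjection_mem_her_of_inverse_in_corner hx hq.isSelfAdjoint hR hRxR hRxq
  refine ⟨p, hp, hmem, hle.trans ?_⟩
  rw [CStarAlgebra.norm_le_iff_le_algebraMap _ hε.le (hq.one_sub.isSelfAdjoint.conjugate_nonneg hx)]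
  simpa [mul_div_cancel₀] using hup

end Projections

section OrthogonalSequence

open Finset

lemma IsStarProjection.mul_eq_zero_of_sum_range_mul_eq_zero {R : Type*} [Ring R] [StarRing R]
    {p : ℕ → R} (hp : ∀ n, IsStarProjection (p n)) (h : ∀ n, (∑ i ∈ range n, p i) * p n = 0)
    {i j : ℕ} (hij : i ≠ j) : p i * p j = 0 := by
  have h' : ∀ n, p n * ∑ i ∈ range n, p i = 0 := fun n => by
    simpa [star_sum, (hp _).isSelfAdjoint.star_eq] using congr_arg star (h n)
  have hsum : ∀ j, ∀ i < j, (∑ k ∈ range j, p k) * p i = p i := by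
    intro j
    induction j with
    | zero => simp
    | succ j ih =>
      intro i hi
      rw [sum_range_succ, add_mul]
      rcases Nat.lt_succ_iff_lt_or_eq.1 hi with hi | rfl
      · rw [ih i hi, ← ih i hi, ← mul_assoc (p j), h', zero_mul, ih i hi, add_zero]
      · rw [h, (hp i).isIdempotentElem.eq, zero_add]
  have hlt : ∀ i j, i < j → p j * p i = 0 := fun i j hij => by
    rw [← hsum j i hij, ← mul_assoc, h', zero_mul]
  rcases hij.lt_or_gt with hij | hij
  · simpa [(hp i).isSelfAdjoint.star_eq, (hp j).isSelfAdjoint.star_eq] using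
      congr_arg star (hlt i j hij)
  · exact hlt j i hij

variable {A : Type*} [CStarAlgebra A] [PartialOrder A] [StarOrderedRing A] {a : A}

lemma exists_isStarProjection_orthogonal_step (hrr0 : RealRankZero A) (ha : 0 ≤ a) {S : A}
    (hS : IsStarProjection S) (hSa : S ∈ her a) {ε : ℝ} (hε : 0 < ε) :
    ∃ r : A, IsStarProjection r ∧ r ∈ her a ∧ S * r = 0 ∧
      ‖(1 - (S + r)) * a * (1 - (S + r))‖ ≤ ε := by
  set X := (1 - S) * a * (1 - S)
  have hX : 0 ≤ X := hS.one_sub.isSelfAdjoint.conjugate_nonneg ha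
  have hXa : X ∈ her a := by
    have haa := mem_her_self ha
    have : X = a - S * a - a * S + S * a * S := by simp only [X]; noncomm_ring
    rw [this]
    exact add_mem_her (sub_mem_her (sub_mem_her haa (mul_mem_her hSa haa)) (mul_mem_her haa hSa))
      (mul_mul_mem_her hSa hSa a)
  obtain ⟨r, hr, hrX, hnorm⟩ := exists_isStarProjection_mem_her_norm_le hrr0 hX hε
  have hSr : S * r = 0 := by
    refine mul_eq_zero_of_mem_her ?_ hrX
    simp only [X, ← mul_assoc, hS.mul_one_sub_self, zero_mul]
  have hrS : r * S = 0 := by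
    simpa [hr.isSelfAdjoint.star_eq, hS.isSelfAdjoint.star_eq] using congr_arg star hSr
  have hleft : (1 - r) * (1 - S) = 1 - (S + r) := by
    rw [sub_mul, one_mul, mul_sub, mul_one, hrS]; abel
  have hright : (1 - S) * (1 - r) = 1 - (S + r) := by
    rw [sub_mul, one_mul, mul_sub, mul_one, hSr]; abel
  refine ⟨r, hr, her_subset_her hXa hrX, hSr, ?_⟩
  calc ‖(1 - (S + r)) * a * (1 - (S + r))‖ = ‖(1 - r) * (1 - S) * a * ((1 - S) * (1 - r))‖ := by
        rw [hleft, hright]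
    _ = ‖(1 - r) * X * (1 - r)‖ := by simp only [X]; noncomm_ring
    _ ≤ ε := hnorm

lemma exists_orthogonal_isStarProjection_seq (hrr0 : RealRankZero A) (ha : 0 ≤ a) :
    ∃ p : ℕ → A, (∀ n, IsStarProjection (p n) ∧ p n ∈ her a) ∧
      (∀ n, IsStarProjection (∑ i ∈ range n, p i)) ∧ (∀ n, (∑ i ∈ range n, p i) * p n = 0) ∧
      Tendsto (fun n => ‖(1 - ∑ i ∈ range n, p i) * a * (1 - ∑ i ∈ range n, p i)‖) atTop (𝓝 0) := by
  have step : ∀ (n : ℕ) (S : A), ∃ r : A, IsStarProjection S ∧ S ∈ her a →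
      IsStarProjection r ∧ r ∈ her a ∧ S * r = 0 ∧
        ‖(1 - (S + r)) * a * (1 - (S + r))‖ ≤ 1 / (n + 1) := fun n S => by
    by_cases hS : IsStarProjection S ∧ S ∈ her a
    · obtain ⟨r, hr⟩ := exists_isStarProjection_orthogonal_step hrr0 ha hS.1 hS.2
        (Nat.one_div_pos_of_nat (n := n))
      exact ⟨r, fun _ => hr⟩
    · exact ⟨0, fun h => absurd h hS⟩
  choose next hnext using step
  let S : ℕ → A := fun n => Nat.rec 0 (fun k Sk => Sk + next k Sk) n
  have hS_succ (n : ℕ) : S (n + 1) = S n + next n (S n) := rfl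
  have hS_sum (n : ℕ) : S n = ∑ i ∈ range n, next i (S i) := by
    induction n with
    | zero => rfl
    | succ n ih => rw [sum_range_succ, ← ih, hS_succ]
  have hS (n : ℕ) : IsStarProjection (S n) ∧ S n ∈ her a := by
    induction n with
    | zero => exact ⟨.zero A, zero_mem_her⟩
    | succ n ih =>
      obtain ⟨hr, hra, hSr, -⟩ := hnext n (S n) ih
      exact ⟨ih.1.add hr hSr, add_mem_her ih.2 hra⟩
  refine ⟨fun n => next n (S n), fun n => ⟨(hnext n _ (hS n)).1, (hnext n _ (hS n)).2.1⟩,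
    fun n => hS_sum n ▸ (hS n).1, fun n => hS_sum n ▸ (hnext n _ (hS n)).2.2.1, ?_⟩
  rw [← tendsto_add_atTop_iff_nat 1]
  refine squeeze_zero (fun _ => norm_nonneg _) (fun n => ?_)
    tendsto_one_div_add_atTop_nhds_zero_nat
  rw [← hS_sum, hS_succ]
  exact (hnext n _ (hS n)).2.2.2

lemma pow_smul_sum_range_le_of_hasSum {p : ℕ → A} (hp : ∀ i, 0 ≤ p i) {b : A}
    (hb : HasSum (fun i => ((1 : ℝ) / 2) ^ (i + 1) • p i) b) (n : ℕ) :
    ((1 : ℝ) / 2) ^ n • ∑ i ∈ range n, p i ≤ b := by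
  rw [smul_sum]
  refine (sum_le_sum fun i hi => ?_).trans
    (sum_le_hasSum _ (fun i _ => smul_nonneg (by positivity) (hp i)) hb)
  exact smul_le_smul_of_nonneg_right
    (pow_le_pow_of_le_one (by norm_num) (by norm_num) (mem_range.1 hi)) (hp i)

end OrthogonalSequence

section Homotopy

variable {A : Type*} [CStarAlgebra A] [PartialOrder A] [StarOrderedRing A] {a b : A}

lemma segment_mem_her_nonneg_cuntzEquiv (ha : 0 ≤ a) (hb : 0 ≤ b) (hba : b ∈ her a)
    (hab : CuntzLE a b) {t : ℝ} (ht : t ∈ Set.Icc (0 : ℝ) 1) :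
    (1 - t) • a + t • b ∈ her a ∧ 0 ≤ (1 - t) • a + t • b ∧
      CuntzEquiv ((1 - t) • a + t • b) a := by
  have hmem := add_mem_her (smul_mem_her (1 - t) (mem_her_self ha)) (smul_mem_her t hba)
  have hnonneg := add_nonneg (smul_nonneg (sub_nonneg.2 ht.2) ha) (smul_nonneg ht.1 hb)
  refine ⟨hmem, hnonneg, cuntzLE_of_mem_her hnonneg ha hmem, ?_⟩
  rcases ht.2.eq_or_lt with rfl | ht1
  · simpa using hab
  · exact (cuntzLE_smul_self a (sub_pos.2 ht1)).trans
      (.of_le (smul_nonneg (sub_pos.2 ht1).le ha) (le_add_of_nonneg_right (smul_nonneg ht.1 hb)))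

end Homotopy

theorem homotopy_to_orthogonal_projection_sum_general {A : Type*} [CStarAlgebra A] [PartialOrder A]
    [StarOrderedRing A]
    (hrr0 : RealRankZero A)
    (a : A) (ha : 0 ≤ a) :
    ∃ p : ℕ → A,
      (∀ i, IsProjection (p i) ∧ p i ∈ her a) ∧
      (∀ i j, i ≠ j → p i * p j = 0) ∧
      ∃ b : A,
        Tendsto (fun n => ∑ i ∈ Finset.range n, ((1 : ℝ) / 2) ^ (i + 1) • p i) atTop (𝓝 b) ∧
        ∃ h : ℝ → A, ContinuousOn h (Set.Icc 0 1) ∧ h 0 = a ∧ h 1 = b ∧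
          ∀ t ∈ Set.Icc (0 : ℝ) 1, h t ∈ her a ∧ 0 ≤ h t ∧ CuntzEquiv (h t) a := by
  obtain ⟨p, hp, hS, horth, hlim⟩ := exists_orthogonal_isStarProjection_seq hrr0 ha
  have hsum : Summable fun i => ((1 : ℝ) / 2) ^ (i + 1) • p i :=
    .of_norm_bounded (summable_geometric_two.mul_left (1 / 2)) fun i => by
      rw [norm_smul, pow_succ', Real.norm_of_nonneg (by positivity)]
      exact mul_le_of_le_one_right (by positivity) ((hp i).1.norm_le _)
  set b := ∑' i, ((1 : ℝ) / 2) ^ (i + 1) • p i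
  have hb_nonneg : 0 ≤ b :=
    hsum.hasSum.nonneg fun i => smul_nonneg (by positivity) (hp i).1.nonneg
  have hb_mem : b ∈ her a := isClosed_closure.mem_of_tendsto hsum.hasSum.tendsto_sum_nat
    (.of_forall fun n => sum_mem_her fun i _ => smul_mem_her _ (hp i).2)
  have hab : CuntzLE a b := cuntzLE_of_tendsto_norm_compression ha hS hlim fun n =>
    (cuntzLE_smul_self _ (by positivity : (0 : ℝ) < (1 / 2) ^ n)).trans
      (.of_le (smul_nonneg (by positivity) (hS n).nonneg)
        (pow_smul_sum_range_le_of_hasSum (fun i => (hp i).1.nonneg) hsum.hasSum n))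
  refine ⟨p, fun i => ⟨⟨(hp i).1.isSelfAdjoint, (hp i).1.isIdempotentElem⟩, (hp i).2⟩,
    fun i j hij => IsStarProjection.mul_eq_zero_of_sum_range_mul_eq_zero (fun n => (hp n).1)
      horth hij, b, hsum.hasSum.tendsto_sum_nat, fun t => (1 - t) • a + t • b, by fun_prop,
    by simp, by simp, fun t ht => segment_mem_her_nonneg_cuntzEquiv ha hb_nonneg hb_mem hab ht⟩

/-- Proposition 3.2 of the paper. Under the hypotheses of the main theorem,
every positive `a` is homotopic, through positive elements of `her(a)` of constant Cuntz
class, to an element `b = Σᵢ 2⁻ⁱ pᵢ` for mutually orthogonal projections `pᵢ ∈ her(a)`. -/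
theorem homotopy_to_orthogonal_projection_sum {A : Type*} [CStarAlgebra A] [PartialOrder A]
    [StarOrderedRing A] [TopologicalSpace.SeparableSpace A]
    (hsimple : IsSimpleCStarAlgebra A)
    (hdiv : ApproximatelyDivisible A)
    (hrr0 : RealRankZero A)
    (hsf : StablyFinite A)
    (hsc : StrictComparison A)
    (a : A) (ha : 0 ≤ a) :
    ∃ p : ℕ → A,
      (∀ i, IsProjection (p i) ∧ p i ∈ her a) ∧
      (∀ i j, i ≠ j → p i * p j = 0) ∧
      ∃ b : A,
        Tendsto (fun n => ∑ i ∈ Finset.range n, ((1 : ℝ) / 2) ^ (i + 1) • p i) atTop (𝓝 b) ∧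
        ∃ h : ℝ → A, ContinuousOn h (Set.Icc 0 1) ∧ h 0 = a ∧ h 1 = b ∧
          ∀ t ∈ Set.Icc (0 : ℝ) 1, h t ∈ her a ∧ 0 ≤ h t ∧ CuntzEquiv (h t) a :=
  homotopy_to_orthogonal_projection_sum_general hrr0 a ha
end
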